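/- arXiv:1206.0326 — 2 statements merged into one kernel-verified Lean document; each statement's English description precedes it below -/
import Mathlib

section
/- Suppose that for all finite nilpotent commutative semigroups S with zero and for n ∈ {n_1, n_2}, the inequality card(S^(n) \ {0}) · n ≤ card(S \ {0}) holds. Then the same inequality holds for n = n_1·n_2, for all such S. -/
open Pointwise

/-- `pw x n` is the `n`-th power of `x` in any magma, for `n ≥ 1`
(with the junk value `pw x 0 = x`). -/
def pw {R : Type*} [Mul R] (x : R) : ℕ → R
  | 0 => x
  | 1 => x
  | n + 2 => x * pw x (n + 1)

/-! Since `S` is commutative, `S^(n₁)` is a subsemigroup containing `0`, hence itself a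
finite nilpotent commutative semigroup with zero, and `(S^(n₁))^(n₂) = S^(n₁ n₂)`. Applying
the hypothesis to `S^(n₁)` with `n₂` and then to `S` with `n₁` gives
`n₁ n₂ |S^(n₁ n₂) \ 0| ≤ n₁ |S^(n₁) \ 0| ≤ |S \ 0|`. -/

section Magma

variable {M N : Type*} [Mul M] [Mul N]

lemma pw_succ (x : M) {n : ℕ} (hn : 1 ≤ n) : pw x (n + 1) = x * pw x n := by
  obtain ⟨k, rfl⟩ := Nat.exists_eq_add_of_le' hn
  rfl

lemma map_pw {f : M → N} (hf : ∀ a b, f (a * b) = f a * f b) (x : M) :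
    ∀ n, f (pw x n) = pw (f x) n
  | 0 | 1 => rfl
  | n + 2 => by rw [pw, hf, map_pw hf x (n + 1), pw]

lemma pw_mono {A B : Set M} (h : A ⊆ B) : ∀ n, pw A n ⊆ pw B n
  | 0 | 1 => h
  | n + 2 => Set.mul_subset_mul h (pw_mono h (n + 1))

lemma pw_mem_pw {A : Set M} {x : M} (hx : x ∈ A) (n : ℕ) : pw x n ∈ pw A n := by
  rw [← Set.singleton_subset_iff,
    map_pw (f := fun y : M => ({y} : Set M)) (fun _ _ => Set.singleton_mul_singleton.symm)]
  exact pw_mono (Set.singleton_subset_iff.2 hx) n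

end Magma

lemma zero_pw {M₀ : Type*} [MulZeroClass M₀] : ∀ n, pw (0 : M₀) n = 0
  | 0 | 1 => rfl
  | _ + 2 => zero_mul _

section Semigroup

variable {S : Type*} [Semigroup S]

lemma pw_mul_pw (x : S) {m n : ℕ} (hm : 1 ≤ m) (hn : 1 ≤ n) :
    pw x m * pw x n = pw x (m + n) := by
  induction m, hm using Nat.le_induction with
  | base => rw [add_comm, pw_succ x hn]; rfl
  | succ m hm ih => rw [pw_succ x hm, mul_assoc, ih, add_right_comm, pw_succ x (by omega)]

lemma pw_pw (x : S) {m n : ℕ} (hm : 1 ≤ m) (hn : 1 ≤ n) : pw (pw x m) n = pw x (m * n) := by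
  induction n, hn using Nat.le_induction with
  | base => rw [mul_one]; rfl
  | succ n hn ih =>
    rw [pw_succ _ hn, ih, pw_mul_pw x hm (Nat.mul_pos hm hn), Nat.mul_succ, add_comm]

lemma pw_mul (comm : ∀ a b : S, a * b = b * a) (x y : S) :
    ∀ n, pw (x * y) n = pw x n * pw y n
  | 0 | 1 => rfl
  | n + 2 => by
    let _ : CommSemigroup S := { mul_comm := comm }
    rw [pw, pw_mul comm x y (n + 1), mul_mul_mul_comm]
    rfl

def pwSubsemigroup (comm : ∀ a b : S, a * b = b * a) (n : ℕ) : Subsemigroup S where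
  carrier := Set.range fun s => pw s n
  mul_mem' := by
    rintro _ _ ⟨s, rfl⟩ ⟨t, rfl⟩
    exact ⟨s * t, pw_mul comm s t n⟩

lemma image_range_pw_pwSubsemigroup (comm : ∀ a b : S, a * b = b * a) {m n : ℕ}
    (hm : 1 ≤ m) (hn : 1 ≤ n) :
    Subtype.val '' Set.range (fun t : pwSubsemigroup comm m => pw t n)
      = Set.range fun s : S => pw s (m * n) := by
  have hval (t : pwSubsemigroup comm m) :
      ((pw t n : pwSubsemigroup comm m) : S) = pw (t : S) n :=
    map_pw (fun _ _ => rfl) t n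
  ext y
  constructor
  · rintro ⟨_, ⟨⟨_, s, rfl⟩, rfl⟩, rfl⟩
    exact ⟨s, by rw [hval, pw_pw s hm hn]⟩
  · rintro ⟨s, rfl⟩
    exact ⟨_, ⟨⟨pw s m, s, rfl⟩, rfl⟩, by rw [hval, pw_pw s hm hn]⟩

end Semigroup

section WithZero

variable {S T : Type*} [SemigroupWithZero S]

lemma zero_mem_pwSubsemigroup (comm : ∀ a b : S, a * b = b * a) (n : ℕ) :
    (0 : S) ∈ pwSubsemigroup comm n :=
  ⟨0, zero_pw n⟩

abbrev Subsemigroup.semigroupWithZero (P : Subsemigroup S) (h0 : (0 : S) ∈ P) :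
    SemigroupWithZero P :=
  letI : Zero P := ⟨⟨0, h0⟩⟩
  Subtype.val_injective.semigroupWithZero _ rfl fun _ _ => rfl

lemma pw_univ_eq_singleton_zero_of_injective [SemigroupWithZero T] (f : T →ₙ* S)
    (hf : Function.Injective f) (hf0 : f 0 = 0) {m : ℕ} (hS : pw (Set.univ : Set S) m = {0}) :
    pw (Set.univ : Set T) m = {0} := by
  refine Set.eq_singleton_iff_unique_mem.2
    ⟨zero_pw (M₀ := T) m ▸ pw_mem_pw (Set.mem_univ 0) m, fun x hx => ?_⟩
  have hfx : f x ∈ f '' pw Set.univ m := ⟨x, hx, rfl⟩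
  rw [map_pw (fun _ _ => Set.image_mul f) Set.univ m] at hfx
  replace hfx := pw_mono (Set.subset_univ _) m hfx
  rw [hS, Set.mem_singleton_iff, ← hf0] at hfx
  exact hf hfx

end WithZero

lemma ncard_image_diff_zero {S T : Type*} [Zero S] [Zero T] {f : T → S}
    (hf : Function.Injective f) (hf0 : f 0 = 0) (A : Set T) :
    (f '' A \ {0}).ncard = (A \ {0}).ncard := by
  rw [← hf0, ← Set.image_singleton, ← Set.image_sdiff hf, Set.ncard_image_of_injective _ hf]

theorem stmt_10 (n₁ n₂ : ℕ) (h₁ : 1 ≤ n₁) (h₂ : 1 ≤ n₂)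
    (H : ∀ (S : Type) [SemigroupWithZero S], (∀ a b : S, a * b = b * a) → Finite S →
        (∃ m, 1 ≤ m ∧ pw (Set.univ : Set S) m = {0}) →
        ∀ n, n = n₁ ∨ n = n₂ →
          n * ((Set.range fun s : S => pw s n) \ {0}).ncard
            ≤ ((Set.univ : Set S) \ {0}).ncard) :
    ∀ (S : Type) [SemigroupWithZero S], (∀ a b : S, a * b = b * a) → Finite S →
      (∃ m, 1 ≤ m ∧ pw (Set.univ : Set S) m = {0}) →
      n₁ * n₂ * ((Set.range fun s : S => pw s (n₁ * n₂)) \ {0}).ncard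
        ≤ ((Set.univ : Set S) \ {0}).ncard := by
  intro S _ comm hfin ⟨m, hm, hSm⟩
  let P := pwSubsemigroup comm n₁
  let _ : SemigroupWithZero P := P.semigroupWithZero (zero_mem_pwSubsemigroup comm n₁)
  have hval0 : ((0 : P) : S) = 0 := rfl
  have hPnil : pw (Set.univ : Set P) m = {0} :=
    pw_univ_eq_singleton_zero_of_injective (MulMemClass.subtype P) Subtype.val_injective
      hval0 hSm
  have hP :=
    H P (fun a b => Subtype.ext (comm a b)) inferInstance ⟨m, hm, hPnil⟩ n₂ (.inr rfl)
  have hS := H S comm hfin ⟨m, hm, hSm⟩ n₁ (.inl rfl)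
  calc n₁ * n₂ * ((Set.range fun s : S => pw s (n₁ * n₂)) \ {0}).ncard
      = n₁ * (n₂ * ((Set.range fun t : P => pw t n₂) \ {0}).ncard) := by
        rw [← image_range_pw_pwSubsemigroup comm h₁ h₂,
          ncard_image_diff_zero Subtype.val_injective hval0, mul_assoc]
    _ ≤ n₁ * ((Set.univ : Set P) \ {0}).ncard := Nat.mul_le_mul_left _ hP
    _ = n₁ * ((Set.range fun s : S => pw s n₁) \ {0}).ncard := by
        rw [← ncard_image_diff_zero Subtype.val_injective hval0, Set.image_univ,
          Subtype.range_coe]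
        rfl
    _ ≤ ((Set.univ : Set S) \ {0}).ncard := hS
end

section
/- For any prime p > 2 and any integer i with 1 < i < p, there exists a finite commutative semigroup S with zero and a subset X ⊆ S such that the p-th power map is injective on X and sends no nonzero element of X to 0, yet card(X^(i) \ {0}) < card(X \ {0}). -/
/-- A witness for Statement 13: a finite commutative semigroup $S$ with zero and a
subset $X$ on which the $p$-th power map is injective and kills no nonzero element,
yet $X^{(i)}$ is smaller than $X$ away from zero. -/
structure Stmt13Witness (p i : ℕ) where
  S : Type
  [inst : SemigroupWithZero S]
  comm : ∀ a b : S, a * b = b * a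
  fin : Finite S
  X : Set S
  inj : Set.InjOn (fun x => pw x p) X
  nz : ∀ x ∈ X, x ≠ 0 → pw x p ≠ 0
  card_lt : (((fun x => pw x i) '' X) \ {0}).ncard < (X \ {0}).ncard

/-! The group `C_i` with a zero adjoined already works: the `p`-th power map is a bijection
of `C_i` because `p` is prime to `i`, while every `i`-th power is `1`. -/

lemma pw_eq_pow {M : Type*} [Monoid M] (x : M) : ∀ {n : ℕ}, n ≠ 0 → pw x n = x ^ n
  | 1, _ => by simp [pw]
  | n + 2, _ => by rw [pw, pw_eq_pow x n.succ_ne_zero, ← pow_succ']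

namespace WithZero

variable {G : Type*} [Group G]

lemma pw_coe (g : G) {n : ℕ} (hn : n ≠ 0) : pw (g : WithZero G) n = ↑(g ^ n) := by
  rw [pw_eq_pow _ hn, coe_pow]

lemma injOn_pw_range_coe {n : ℕ} (hG : (Nat.card G).Coprime n) (hn : n ≠ 0) :
    Set.InjOn (fun x : WithZero G => pw x n) (Set.range ((↑) : G → WithZero G)) := by
  rintro _ ⟨g, rfl⟩ _ ⟨h, rfl⟩ hgh
  simp only [pw_coe _ hn, coe_inj] at hgh
  rw [hG.pow_left_bijective.injective hgh]

lemma image_pw_card_range_coe [Finite G] :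
    (fun x : WithZero G => pw x (Nat.card G)) '' Set.range ((↑) : G → WithZero G) = {1} := by
  refine Set.eq_singleton_iff_nonempty_unique_mem.2 ⟨⟨_, 1, ⟨1, rfl⟩, rfl⟩, ?_⟩
  rintro _ ⟨_, ⟨g, rfl⟩, rfl⟩
  simp only [pw_coe g Nat.card_pos.ne', pow_card_eq_one', coe_one]

lemma ncard_range_coe_diff_zero :
    (Set.range ((↑) : G → WithZero G) \ {0}).ncard = Nat.card G := by
  rw [Set.sdiff_singleton_eq_self (by simp), Set.ncard_range_of_injective coe_injective]

end WithZero

open WithZero in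
noncomputable def stmt13WitnessOfCommGroup (G : Type) [CommGroup G] [Finite G] {p : ℕ}
    (hG : (Nat.card G).Coprime p) (hp : p ≠ 0) (hG1 : 1 < Nat.card G) :
    Stmt13Witness p (Nat.card G) where
  S := WithZero G
  comm := mul_comm
  fin := inferInstanceAs (Finite (Option G))
  X := Set.range ((↑) : G → WithZero G)
  inj := injOn_pw_range_coe hG hp
  nz := by
    rintro _ ⟨g, rfl⟩ -
    simp [pw_coe g hp]
  card_lt := by
    rw [image_pw_card_range_coe, Set.sdiff_singleton_eq_self (by simp), Set.ncard_singleton,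
      ncard_range_coe_diff_zero]
    exact hG1

theorem stmt_13_general (p i : ℕ) (hp : p.Prime) (hi1 : 1 < i) (hip : i < p) :
    Nonempty (Stmt13Witness p i) := by
  have : NeZero i := ⟨by omega⟩
  have hcard : Nat.card (Multiplicative (ZMod i)) = i := by
    simp [Nat.card_eq_fintype_card, ZMod.card]
  have hcop : i.Coprime p :=
    ((hp.coprime_iff_not_dvd).2 (Nat.not_dvd_of_pos_of_lt (by omega) hip)).symm
  rw [← hcard] at hcop hi1 ⊢
  exact ⟨stmt13WitnessOfCommGroup _ hcop hp.ne_zero hi1⟩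

theorem stmt_13 (p i : ℕ) (hp : p.Prime) (hp2 : 2 < p) (hi1 : 1 < i) (hip : i < p) :
    Nonempty (Stmt13Witness p i) :=
  stmt_13_general p i hp hi1 hip
end
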